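/- arXiv:1312.2163 — 3 statements merged into one kernel-verified Lean document; each statement's English description precedes it below -/
import Mathlib

section
/- The ball of radius u in S_n under the r-regular Ulam distance satisfies |B^r_∘(u)| ≤ (r!)^{2n/r} · |B^1_∘(u)|, where B^r_∘(u) = {π ∈ S_n : d_∘^r(π, e) ≤ u} and B^1_∘(u) is the ordinary Ulam ball of radius u around the identity. -/
/-- The `r`-regular multipermutation associated with a permutation `π` of `Fin n`:
`mp n r π j` is the (0-indexed) rank block of element `j`, i.e. `⌊π⁻¹(j)/r⌋`. -/
def mp (n r : ℕ) (π : Equiv.Perm (Fin n)) (j : Fin n) : ℕ := (π.symm j : ℕ) / r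

/-- The `i`-th part of the ordered set partition associated with `π`:
the set of elements of rank block `i`. -/
def part (n r : ℕ) (π : Equiv.Perm (Fin n)) (i : ℕ) : Finset (Fin n) :=
  Finset.univ.filter fun j => mp n r π j = i

/-- The `r`-regular Hamming distance between permutations. -/
def hammR (n r : ℕ) (π σ : Equiv.Perm (Fin n)) : ℕ :=
  (Finset.univ.filter fun j => mp n r π j ≠ mp n r σ j).card

/-- Length of a longest common subsequence of two lists. -/
noncomputable def lcsLen {α : Type*} (A B : List α) : ℕ :=
  sSup {k | ∃ l : List α, l.length = k ∧ l.Sublist A ∧ l.Sublist B}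

/-- Ulam distance between two lists of the same length (length minus LCS length). -/
noncomputable def ulamList {α : Type*} (A B : List α) : ℕ := A.length - lcsLen A B

/-- The Ulam distance between two permutations of `Fin n`. -/
noncomputable def ulam (n : ℕ) (π σ : Equiv.Perm (Fin n)) : ℕ :=
  n - lcsLen (List.ofFn π) (List.ofFn σ)

/-- The `r`-regular Ulam distance: minimum Ulam distance between members of the
`≡_r`-equivalence classes of `π` and `σ`. -/
noncomputable def ulamR (n r : ℕ) (π σ : Equiv.Perm (Fin n)) : ℕ :=
  sInf {k | ∃ π' σ' : Equiv.Perm (Fin n),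
    mp n r π' = mp n r π ∧ mp n r σ' = mp n r σ ∧ k = ulam n π' σ'}

/-! If `d_∘^r(π, e) ≤ u`, pick `π' ≡_r π` and `σ' ≡_r e` with `d_∘(π', σ') ≤ u`. Then
`π = σ' · (σ'⁻¹ π') · (π'⁻¹ π)`: the outer factors lie in the class `H` of `e`, and the middle one
lies in the Ulam ball because `d_∘` is left invariant. Hence `B^r_∘(u) ⊆ H · B^1_∘(u) · H`, and `H`,
the group of permutations preserving each block `{ir, …, ir + r - 1}`, has `(r!)^{n/r}` elements. -/

open Finset Equiv
open scoped Pointwise Nat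

theorem lcsLen_map {α β : Type*} {g : α → β} (hg : Function.Injective g) (A B : List α) :
    lcsLen (A.map g) (B.map g) = lcsLen A B := by
  unfold lcsLen
  congr 1
  ext k
  constructor
  · rintro ⟨l, rfl, hA, hB⟩
    obtain ⟨lA, hlA, rfl⟩ := List.sublist_map_iff.mp hA
    obtain ⟨lB, hlB, hEq⟩ := List.sublist_map_iff.mp hB
    obtain rfl : lA = lB := List.map_injective_iff.mpr hg hEq
    exact ⟨lA, (List.length_map _).symm, hlA, hlB⟩
  · rintro ⟨l, rfl, hA, hB⟩
    exact ⟨l.map g, List.length_map _, hA.map g, hB.map g⟩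

theorem ulam_mul_left {n : ℕ} (ρ π σ : Perm (Fin n)) :
    ulam n (ρ * π) (ρ * σ) = ulam n π σ := by
  simp only [ulam, Perm.coe_mul, ← List.map_ofFn, lcsLen_map ρ.injective]

theorem ulam_inv_mul_one {n : ℕ} (π σ : Perm (Fin n)) : ulam n (σ⁻¹ * π) 1 = ulam n π σ := by
  rw [← ulam_mul_left σ, mul_inv_cancel_left, mul_one]

theorem Fin.card_val_div_eq {n r i : ℕ} (hr : 0 < r) (hi : (i + 1) * r ≤ n) :
    Fintype.card {a : Fin n // (a : ℕ) / r = i} = r := by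
  refine (Fintype.card_congr ?_).trans (Fintype.card_fin r)
  exact {
    toFun a := ⟨a.1 % r, Nat.mod_lt _ hr⟩
    invFun k := ⟨⟨i * r + k, by rw [add_mul, one_mul] at hi; omega⟩,
      Nat.div_eq_of_lt_le (Nat.le_add_right _ _) (by simp only [add_mul, one_mul]; omega)⟩
    left_inv a := by
      obtain ⟨a, rfl⟩ := a
      ext; simp [Nat.div_add_mod']
    right_inv k := by ext; simp [Nat.mod_eq_of_lt k.isLt] }

theorem card_perm_preserving_div {n r : ℕ} (hr : 0 < r) (hdvd : r ∣ n) :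
    Fintype.card {τ : Perm (Fin n) // ∀ j, (τ j : ℕ) / r = j / r} = r ! ^ (n / r) := by
  let f : Fin n → Fin (n / r) := fun j => ⟨j / r, Nat.div_lt_div_of_lt_of_dvd hdvd j.isLt⟩
  have hfiber (i : Fin (n / r)) : Fintype.card {a // f a = i} = r :=
    (Fintype.card_congr (subtypeEquivRight fun a => Fin.ext_iff)).trans
      (Fin.card_val_div_eq hr ((Nat.le_div_iff_mul_le hr).mp i.isLt))
  calc Fintype.card {τ : Perm (Fin n) // ∀ j, (τ j : ℕ) / r = j / r}
      = Fintype.card {τ : Perm (Fin n) // f ∘ τ = f} :=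
        Fintype.card_congr (subtypeEquivRight fun τ => by simp [funext_iff, f, Fin.ext_iff])
    _ = r ! ^ (n / r) := by
        simp only [DomMulAct.stabilizer_card, hfiber, prod_const, card_univ, Fintype.card_fin]

theorem mp_apply (n r : ℕ) (π : Perm (Fin n)) (j : Fin n) : mp n r π j = (π⁻¹ j : ℕ) / r := rfl

def mpClass (n r : ℕ) (π : Perm (Fin n)) : Finset (Perm (Fin n)) := {τ | mp n r τ = mp n r π}

theorem mem_mpClass_one_iff {n r : ℕ} {τ : Perm (Fin n)} :
    τ ∈ mpClass n r 1 ↔ ∀ j, (τ j : ℕ) / r = j / r := by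
  simp only [mpClass, mem_filter, mem_univ, true_and]
  refine ⟨fun h j => ?_, fun h => funext fun j => ?_⟩
  · simpa [mp_apply] using (congrFun h (τ j)).symm
  · simpa [mp_apply] using (h (τ⁻¹ j)).symm

theorem card_mpClass_one {n r : ℕ} (hr : 0 < r) (hdvd : r ∣ n) :
    #(mpClass n r 1) = r ! ^ (n / r) := by
  rw [← card_perm_preserving_div hr hdvd, ← Fintype.card_coe]
  exact Fintype.card_congr (subtypeEquivRight fun τ => mem_mpClass_one_iff)

theorem inv_mul_mem_mpClass_one {n r : ℕ} {π π' : Perm (Fin n)} (h : π' ∈ mpClass n r π) :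
    π⁻¹ * π' ∈ mpClass n r 1 := by
  simp only [mpClass, mem_filter, mem_univ, true_and] at h ⊢
  funext j
  simpa [mp_apply] using congrFun h (π j)

noncomputable def ulamBall (n u : ℕ) : Finset (Perm (Fin n)) := {π | ulam n π 1 ≤ u}

noncomputable def ulamRBall (n r u : ℕ) : Finset (Perm (Fin n)) := {π | ulamR n r π 1 ≤ u}

theorem exists_ulam_le_of_ulamR_le {n r u : ℕ} {π σ : Perm (Fin n)} (h : ulamR n r π σ ≤ u) :
    ∃ π' ∈ mpClass n r π, ∃ σ' ∈ mpClass n r σ, ulam n π' σ' ≤ u := by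
  obtain ⟨π', σ', hπ', hσ', hk⟩ := Nat.sInf_mem (⟨_, π, σ, rfl, rfl, rfl⟩ :
    {k | ∃ π' σ' : Perm (Fin n), mp n r π' = mp n r π ∧ mp n r σ' = mp n r σ ∧
      k = ulam n π' σ'}.Nonempty)
  exact ⟨π', by simpa [mpClass] using hπ', σ', by simpa [mpClass] using hσ', hk ▸ h⟩

theorem ulamRBall_subset {n r u : ℕ} :
    ulamRBall n r u ⊆ mpClass n r 1 * ulamBall n u * mpClass n r 1 := by
  intro π hπ
  simp only [ulamRBall, mem_filter, mem_univ, true_and] at hπ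
  obtain ⟨π', hπ', σ', hσ', hle⟩ := exists_ulam_le_of_ulamR_le hπ
  rw [show π = σ' * (σ'⁻¹ * π') * (π'⁻¹ * π) by group]
  refine mul_mem_mul (mul_mem_mul hσ' ?_) (inv_mul_mem_mpClass_one ?_)
  · simpa [ulamBall, ulam_inv_mul_one] using hle
  · simpa [mpClass, eq_comm] using hπ'

theorem ulamR_ball_le_general (n r u : ℕ) (hr : 0 < r) (hdvd : r ∣ n) :
    Nat.card {π : Equiv.Perm (Fin n) // ulamR n r π 1 ≤ u} ≤
      (Nat.factorial r) ^ (2 * (n / r)) *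
        Nat.card {π : Equiv.Perm (Fin n) // ulam n π 1 ≤ u} := by
  rw [Nat.card_eq_fintype_card, Fintype.card_subtype, Nat.card_eq_fintype_card,
    Fintype.card_subtype]
  calc #(ulamRBall n r u)
      ≤ #(mpClass n r 1 * ulamBall n u * mpClass n r 1) := card_le_card ulamRBall_subset
    _ ≤ #(mpClass n r 1) * #(ulamBall n u) * #(mpClass n r 1) :=
        card_mul_le.trans (Nat.mul_le_mul_right _ card_mul_le)
    _ = r ! ^ (2 * (n / r)) * #(ulamBall n u) := by
        rw [card_mpClass_one hr hdvd, two_mul, pow_add]; ring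

/-- The ball of radius `u` in `S_n` under the `r`-regular Ulam distance is at most
`(r!)^{2n/r}` times larger than the ordinary Ulam ball of radius `u` around the
identity. -/
theorem ulamR_ball_le (n r u : ℕ) (hn : 0 < n) (hr : 0 < r) (hdvd : r ∣ n) :
    Nat.card {π : Equiv.Perm (Fin n) // ulamR n r π 1 ≤ u} ≤
      (Nat.factorial r) ^ (2 * (n / r)) *
        Nat.card {π : Equiv.Perm (Fin n) // ulam n π 1 ≤ u} :=
  ulamR_ball_le_general n r u hr hdvd
end

section
/- A code satisfying the almost-disjointness condition corrects t translocations: let C be an r-regular multipermutation code of length n and t a positive integer with 2t < r; if for all codewords π, σ and all ranks i ∈ [n/r], either o^r_π(i) = o^r_σ(i) or |o^r_π(i) ∩ o^r_σ(i)| < r − 2t, then the minimum r-regular Ulam distance of C is at least 2t+1. -/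
/-!
If `ulamR π σ ≤ 2t`, pick representatives `π' ≡ π`, `σ' ≡ σ` with a common subsequence `l` missing
at most `2t` letters. The `k`-th entry of `l` sits at a position between `k` and `k + 2t` in both
`π'` and `σ'`, so the `r - 2t` entries of `l` with indices in `[ir, ir + r - 2t)` have rank `i` in
both. Hence same-rank parts of `π` and `σ` meet in at least `r - 2t` elements; by almost
disjointness they coincide, i.e. `π ≡ σ`.
-/

open Finset

namespace Fin

variable {m n : ℕ} {f : Fin m → Fin n}

lemma le_val_apply_of_strictMono (hf : StrictMono f) (k : Fin m) : (k : ℕ) ≤ f k := by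
  have h := card_le_card_of_injOn f (s := Iic k) (t := Iic (f k))
    (fun x hx => by simpa using hf.monotone (by simpa using hx)) hf.injective.injOn
  simpa using h

lemma val_apply_add_le_of_strictMono (hf : StrictMono f) (k : Fin m) :
    (f k : ℕ) + (m - k) ≤ n := by
  have h := card_le_card_of_injOn f (s := Ici k) (t := Ici (f k))
    (fun x hx => by simpa using hf.monotone (by simpa using hx)) hf.injective.injOn
  simp only [card_Ici] at h
  omega

end Fin

lemma List.Sublist.exists_get_eq_ofFn {α : Type*} {n : ℕ} {g : Fin n → α} {l : List α}
    (h : l.Sublist (List.ofFn g)) (k : Fin l.length) :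
    ∃ p : Fin n, l.get k = g p ∧ (k : ℕ) ≤ p ∧ (p : ℕ) + (l.length - k) ≤ n := by
  obtain ⟨e, he⟩ := List.sublist_iff_exists_fin_orderEmbedding_get_eq.mp h
  refine ⟨⟨e k, by simpa using (e k).isLt⟩, by simpa using he k, ?_, ?_⟩
  · simpa using Fin.le_val_apply_of_strictMono e.strictMono k
  · simpa using Fin.val_apply_add_le_of_strictMono e.strictMono k

lemma exists_sublist_length_eq_lcsLen {α : Type*} (A B : List α) :
    ∃ l : List α, l.length = lcsLen A B ∧ l.Sublist A ∧ l.Sublist B := by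
  show lcsLen A B ∈ {k | ∃ l : List α, l.length = k ∧ l.Sublist A ∧ l.Sublist B}
  refine Nat.sSup_mem ⟨0, [], rfl, List.nil_sublist _, List.nil_sublist _⟩ ⟨A.length, ?_⟩
  rintro _ ⟨l, rfl, hA, -⟩
  exact hA.length_le

lemma exists_ulamR_eq (n r : ℕ) (π σ : Equiv.Perm (Fin n)) :
    ∃ π' σ' : Equiv.Perm (Fin n), mp n r π' = mp n r π ∧ mp n r σ' = mp n r σ ∧
      ulamR n r π σ = ulam n π' σ' := by
  show ulamR n r π σ ∈ {k | ∃ π' σ' : Equiv.Perm (Fin n),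
    mp n r π' = mp n r π ∧ mp n r σ' = mp n r σ ∧ k = ulam n π' σ'}
  exact Nat.sInf_mem ⟨ulam n π σ, π, σ, rfl, rfl, rfl⟩

lemma exists_common_sublist_of_ulam_le {n d : ℕ} {π σ : Equiv.Perm (Fin n)}
    (h : ulam n π σ ≤ d) :
    ∃ l : List (Fin n), l.Sublist (List.ofFn π) ∧ l.Sublist (List.ofFn σ) ∧ n ≤ l.length + d := by
  obtain ⟨l, hl, hπ, hσ⟩ := exists_sublist_length_eq_lcsLen (List.ofFn π) (List.ofFn σ)
  refine ⟨l, hπ, hσ, ?_⟩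
  unfold ulam at h
  omega

section Parts

variable {n r : ℕ}

lemma mem_part_iff {π : Equiv.Perm (Fin n)} {i : ℕ} {j : Fin n} :
    j ∈ part n r π i ↔ (π.symm j : ℕ) / r = i := by
  rw [part, mem_filter]
  simp [mp]

lemma part_congr {π π' : Equiv.Perm (Fin n)} (h : mp n r π' = mp n r π) (i : ℕ) :
    part n r π' i = part n r π i := by
  simp [part, h]

lemma get_mem_part_of_sublist {π : Equiv.Perm (Fin n)} {l : List (Fin n)} {d i : ℕ}
    (hl : l.Sublist (List.ofFn π)) (hlen : n ≤ l.length + d) (k : Fin l.length)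
    (hlo : i * r ≤ k) (hhi : k + d < i * r + r) : l.get k ∈ part n r π i := by
  obtain ⟨p, hp, hkp, hpn⟩ := hl.exists_get_eq_ofFn k
  rw [mem_part_iff, hp, Equiv.symm_apply_apply]
  exact Nat.div_eq_of_lt_le (by omega) (by rw [Nat.succ_mul]; omega)

lemma card_part_inter_ge_of_common_sublist {π σ : Equiv.Perm (Fin n)} {l : List (Fin n)}
    {d i : ℕ} (hπ : l.Sublist (List.ofFn π)) (hσ : l.Sublist (List.ofFn σ))
    (hlen : n ≤ l.length + d) (hi : i * r + r ≤ n) : r - d ≤ #(part n r π i ∩ part n r σ i) := by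
  have hnd : l.Nodup := hπ.nodup (List.nodup_ofFn.mpr π.injective)
  let idx : Fin (r - d) → Fin l.length := fun j => ⟨i * r + j, by omega⟩
  have h := card_le_card_of_injOn (fun j => l.get (idx j)) (s := univ)
    (t := part n r π i ∩ part n r σ i)
    (fun j _ => mem_inter.mpr
      ⟨get_mem_part_of_sublist hπ hlen _ (by simp [idx]) (by simp [idx]; omega),
        get_mem_part_of_sublist hσ hlen _ (by simp [idx]) (by simp [idx]; omega)⟩)
    (fun a _ b _ hab => by simpa [idx, Fin.ext_iff] using hnd.get_inj_iff.mp hab)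
  simpa using h

lemma card_part_inter_ge_of_ulamR_le {π σ : Equiv.Perm (Fin n)} {d i : ℕ}
    (h : ulamR n r π σ ≤ d) (hi : i * r + r ≤ n) :
    r - d ≤ #(part n r π i ∩ part n r σ i) := by
  obtain ⟨π', σ', hπ', hσ', heq⟩ := exists_ulamR_eq n r π σ
  obtain ⟨l, hlπ, hlσ, hlen⟩ := exists_common_sublist_of_ulam_le (heq ▸ h)
  rw [← part_congr hπ', ← part_congr hσ']
  exact card_part_inter_ge_of_common_sublist hlπ hlσ hlen hi

lemma mp_eq_of_part_eq (hdvd : r ∣ n) {π σ : Equiv.Perm (Fin n)}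
    (h : ∀ i < n / r, part n r π i = part n r σ i) : mp n r π = mp n r σ := by
  funext j
  have hj : j ∈ part n r σ (mp n r π j) :=
    h _ (Nat.div_lt_div_of_lt_of_dvd hdvd (π.symm j).isLt) ▸ mem_part_iff.mpr rfl
  exact (mem_part_iff.mp hj).symm

end Parts

theorem almost_disjoint_code_corrects_general (n r t : ℕ) (hdvd : r ∣ n)
    (C : Set (Equiv.Perm (Fin n)))
    (hAD : ∀ π ∈ C, ∀ σ ∈ C, ∀ i < n / r,
      part n r π i = part n r σ i ∨ ((part n r π i) ∩ (part n r σ i)).card < r - 2 * t) :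
    ∀ π ∈ C, ∀ σ ∈ C, mp n r π ≠ mp n r σ → 2 * t + 1 ≤ ulamR n r π σ := by
  intro π hπ σ hσ hne
  by_contra! hclose
  refine hne (mp_eq_of_part_eq hdvd fun i hi => (hAD π hπ σ hσ i hi).resolve_right ?_)
  have hblock : i * r + r ≤ n :=
    calc i * r + r = (i + 1) * r := (Nat.succ_mul i r).symm
      _ ≤ n / r * r := Nat.mul_le_mul_right r hi
      _ ≤ n := Nat.div_mul_le_self n r
  exact (card_part_inter_ge_of_ulamR_le (Nat.le_of_lt_succ hclose) hblock).not_gt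

/-- A multipermutation code whose same-rank parts are pairwise equal or
almost disjoint (intersection smaller than `r − 2t`) has minimum `r`-regular Ulam
distance at least `2t+1`, i.e., it corrects `t` translocation errors. -/
theorem almost_disjoint_code_corrects (n r t : ℕ) (hn : 0 < n) (hr : 0 < r)
    (ht : 0 < t) (htr : 2 * t < r) (hdvd : r ∣ n)
    (C : Set (Equiv.Perm (Fin n)))
    (hAD : ∀ π ∈ C, ∀ σ ∈ C, ∀ i < n / r,
      part n r π i = part n r σ i ∨ ((part n r π i) ∩ (part n r σ i)).card < r - 2 * t) :
    ∀ π ∈ C, ∀ σ ∈ C, mp n r π ≠ mp n r σ → 2 * t + 1 ≤ ulamR n r π σ :=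
  almost_disjoint_code_corrects_general n r t hdvd C hAD
end

section
/- Interleaving construction preserves Ulam distance: let {P_1,...,P_r} be a partition of [n] into sets of size n/r, and for each i let C_i be a set of orderings (permutations) of P_i with pairwise Ulam distance at least d. Then the code C = ∪ R_r(c_1 ∘ ... ∘ c_r), where c_i ∈ C_i and ∘ denotes interleaving one element at a time, has minimum r-regular Ulam distance at least d. -/
/-- The code obtained by interleaving, one element at a time, component codewords
`c i ∈ C i` (orderings of the parts `P i`), and closing under `≡_r`:
the interleaved permutation `σ` has `σ((j-1)r + i) = (c i)(j)`. -/
def interleaveCode (n r : ℕ) (hr : 0 < r) (hdvd : r ∣ n)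
    (C : Fin r → Set (Fin (n / r) → Fin n)) : Set (Equiv.Perm (Fin n)) :=
  {π | ∃ c : (i : Fin r) → (Fin (n / r) → Fin n),
      (∀ i, c i ∈ C i) ∧
      ∃ σ : Equiv.Perm (Fin n), mp n r σ = mp n r π ∧
        ∀ x : Fin n, σ x = c ⟨(x : ℕ) % r, Nat.mod_lt _ hr⟩
          ⟨(x : ℕ) / r, Nat.div_lt_div_of_lt_of_dvd hdvd x.isLt⟩}

namespace List

variable {α : Type*}

lemma lcsLen_bddAbove (A B : List α) :
    BddAbove {k | ∃ l : List α, l.length = k ∧ l.Sublist A ∧ l.Sublist B} :=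
  ⟨A.length, fun _ ⟨_, hl, hA, _⟩ => hl ▸ hA.length_le⟩

lemma length_le_lcsLen {A B l : List α} (hA : l.Sublist A) (hB : l.Sublist B) :
    l.length ≤ lcsLen A B :=
  le_csSup (lcsLen_bddAbove A B) ⟨l, rfl, hA, hB⟩

lemma exists_sublist_length_eq_lcsLen (A B : List α) :
    ∃ l : List α, l.length = lcsLen A B ∧ l.Sublist A ∧ l.Sublist B :=
  Nat.sSup_mem (s := {k | ∃ l : List α, l.length = k ∧ l.Sublist A ∧ l.Sublist B})
    ⟨0, [], rfl, nil_sublist _, nil_sublist _⟩ (lcsLen_bddAbove A B)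

/-- A longest common subsequence of `A` and `B` splits into its `p`-part, a common subsequence
of the projections, and its `!p`-part, a subsequence of `A.filter (!p ·)`. -/
lemma ulamList_filter_le (A B : List α) (p : α → Bool) :
    ulamList (A.filter p) (B.filter p) ≤ ulamList A B := by
  obtain ⟨l, hl, hA, hB⟩ := exists_sublist_length_eq_lcsLen A B
  have hproj : (l.filter p).length ≤ lcsLen (A.filter p) (B.filter p) :=
    length_le_lcsLen (hA.filter p) (hB.filter p)
  have hrest : (l.filter (!p ·)).length ≤ (A.filter (!p ·)).length :=
    (hA.filter _).length_le
  have hA_len := A.length_eq_length_filter_add p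
  have hl_len := l.length_eq_length_filter_add p
  unfold ulamList
  omega

lemma filter_finRange_eq_ofFn {m n : ℕ} {e : Fin m → Fin n} (he : StrictMono e)
    {p : Fin n → Bool} (hp : ∀ x, p x ↔ x ∈ Set.range e) :
    (finRange n).filter p = ofFn e :=
  ((sortedLT_finRange n).pairwise.filter p).sortedLT.eq_of_mem_iff (sortedLT_ofFn_iff.mpr he)
    fun x => by simp [hp]

end List

lemma Finset.image_univ_eq_of_injective {α : Type*} [DecidableEq α] {m : ℕ} {S : Finset α}
    {f : Fin m → α} (hf : Function.Injective f) (hfS : ∀ j, f j ∈ S) (hS : S.card = m) :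
    Finset.univ.image f = S :=
  Finset.eq_of_subset_of_card_le (by simpa [Finset.subset_iff] using hfS)
    (by rw [hS, Finset.card_image_of_injective _ hf, Finset.card_fin])

section Interleave

variable {n r : ℕ}

lemma mp_eq_of_interleave (hr : 0 < r) (hdvd : r ∣ n) {c : Fin r → Fin (n / r) → Fin n}
    {ρ : Equiv.Perm (Fin n)}
    (hρ : ∀ x : Fin n, ρ x = c ⟨(x : ℕ) % r, Nat.mod_lt _ hr⟩
      ⟨(x : ℕ) / r, Nat.div_lt_div_of_lt_of_dvd hdvd x.isLt⟩)
    (i : Fin r) (j : Fin (n / r)) : mp n r ρ (c i j) = j := by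
  have hdiv : ((j : ℕ) * r + i) / r = j := by
    rw [Nat.mul_comm, Nat.mul_add_div hr, Nat.div_eq_of_lt i.isLt, Nat.add_zero]
  have hmod : ((j : ℕ) * r + i) % r = i := by
    rw [Nat.mul_add_mod', Nat.mod_eq_of_lt i.isLt]
  let x : Fin n := ⟨j * r + i, Nat.lt_of_div_lt_div (hdiv ▸ j.isLt)⟩
  have hx : ρ x = c i j := by
    rw [hρ]
    congr
  rw [mp, ← hx, Equiv.symm_apply_apply]
  exact hdiv

lemma filter_ofFn_eq_ofFn_of_mp {m : ℕ} {ρ : Equiv.Perm (Fin n)} {cc : Fin m → Fin n}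
    {S : Finset (Fin n)} (hS : Finset.univ.image cc = S) (hρ : ∀ j, mp n r ρ (cc j) = j) :
    (List.ofFn ρ).filter (· ∈ S) = List.ofFn cc := by
  have hmono : StrictMono fun j => ρ.symm (cc j) := fun j j' hjj' =>
    Nat.lt_of_div_lt_div (c := r) <| by
      change mp n r ρ (cc j) < mp n r ρ (cc j')
      rwa [hρ, hρ]
  have hfilter : (List.finRange n).filter (fun x => decide (ρ x ∈ S)) =
      List.ofFn fun j => ρ.symm (cc j) :=
    List.filter_finRange_eq_ofFn hmono fun x => by
      simp [← hS, Equiv.eq_symm_apply, eq_comm]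
  rw [List.ofFn_eq_map, List.filter_map, Function.comp_def, hfilter, List.map_ofFn]
  simp [Function.comp_def]

end Interleave

theorem interleave_code_distance_general (n r d : ℕ) (hr : 0 < r) (hdvd : r ∣ n)
    (P : Fin r → Finset (Fin n))
    (hPcard : ∀ i, (P i).card = n / r)
    (C : Fin r → Set (Fin (n / r) → Fin n))
    (hmem : ∀ i, ∀ c ∈ C i, Function.Injective c ∧ ∀ j, c j ∈ P i)
    (hdist : ∀ i, ∀ c ∈ C i, ∀ c' ∈ C i, c ≠ c' →
      d ≤ ulamList (List.ofFn c) (List.ofFn c')) :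
    ∀ π ∈ interleaveCode n r hr hdvd C, ∀ σ ∈ interleaveCode n r hr hdvd C,
      mp n r π ≠ mp n r σ → d ≤ ulamR n r π σ := by
  rintro π ⟨c, hc, π₀, hπ₀, hπ₀c⟩ σ ⟨c', hc', σ₀, hσ₀, hσ₀c⟩ hne
  have hπc : ∀ i j, mp n r π (c i j) = j := hπ₀ ▸ mp_eq_of_interleave hr hdvd hπ₀c
  have hσc : ∀ i j, mp n r σ (c' i j) = j := hσ₀ ▸ mp_eq_of_interleave hr hdvd hσ₀c
  obtain ⟨i, hi⟩ : ∃ i, c i ≠ c' i := by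
    obtain ⟨e, he⟩ := Function.ne_iff.mp hne
    rw [← π₀.apply_symm_apply e, hπ₀c] at he
    exact ⟨_, fun h => he (by rw [hπc, h, hσc])⟩
  have hrange : ∀ c ∈ C i, Finset.univ.image c = P i := fun c hc =>
    Finset.image_univ_eq_of_injective (hmem i c hc).1 (hmem i c hc).2 (hPcard i)
  refine le_csInf ⟨_, π, σ, rfl, rfl, rfl⟩ ?_
  rintro _ ⟨π', σ', hπ', hσ', rfl⟩
  calc d ≤ ulamList (List.ofFn (c i)) (List.ofFn (c' i)) := hdist i _ (hc i) _ (hc' i) hi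
    _ = ulamList ((List.ofFn π').filter (· ∈ P i)) ((List.ofFn σ').filter (· ∈ P i)) := by
      rw [filter_ofFn_eq_ofFn_of_mp (hrange _ (hc i)) (hπ' ▸ hπc i),
        filter_ofFn_eq_ofFn_of_mp (hrange _ (hc' i)) (hσ' ▸ hσc i)]
    _ ≤ ulamList (List.ofFn π') (List.ofFn σ') := List.ulamList_filter_le _ _ _
    _ = ulam n π' σ' := by rw [ulamList, List.length_ofFn, ulam]

/-- Interleaving construction: if each component code `C i` consists of orderings of a
part `P i` of a partition of `[n]` into `r` sets of size `n/r`, with pairwise Ulam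
distance at least `d` within each component, then the interleaved code has minimum
`r`-regular Ulam distance at least `d`. -/
theorem interleave_code_distance (n r d : ℕ) (hn : 0 < n) (hr : 0 < r) (hdvd : r ∣ n)
    (P : Fin r → Finset (Fin n))
    (hPcard : ∀ i, (P i).card = n / r)
    (hPdisj : ∀ i i', i ≠ i' → Disjoint (P i) (P i'))
    (C : Fin r → Set (Fin (n / r) → Fin n))
    (hmem : ∀ i, ∀ c ∈ C i, Function.Injective c ∧ ∀ j, c j ∈ P i)
    (hdist : ∀ i, ∀ c ∈ C i, ∀ c' ∈ C i, c ≠ c' →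
      d ≤ ulamList (List.ofFn c) (List.ofFn c')) :
    ∀ π ∈ interleaveCode n r hr hdvd C, ∀ σ ∈ interleaveCode n r hr hdvd C,
      mp n r π ≠ mp n r σ → d ≤ ulamR n r π σ :=
  interleave_code_distance_general n r d hr hdvd P hPcard C hmem hdist
end
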